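/- arXiv:2512.06165 — 4 statements merged into one kernel-verified Lean document; each statement's English description precedes it below -/
import Mathlib

section
/- Let R : Γ₁ → Γ₂ be an admissible relation morphism and let (Ω_v), (T_f) be the associated dynamical Cuntz–Krieger family in G_{Γ₁}. Then: (a) for every u ∈ V₁ and v ∈ V₂, either Z_u ∩ Ω_v = ∅ or Z_u ⊆ Ω_v; and (b) for every u ∈ V₁ and f ∈ E₂, either T_f Z_u = ∅ or there exists a finite path x in Γ₁ with T_f Z_u = Z(x, s(x)). -/
/-- A directed graph. -/
structure DGraph where
  V : Type
  E : Type
  r : E → V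
  s : E → V

namespace DGraph

variable (Γ : DGraph)

/-- A vertex is regular if it receives a finite nonzero number of edges. -/
def Regular (v : Γ.V) : Prop :=
  {e | Γ.r e = v}.Finite ∧ {e | Γ.r e = v}.Nonempty

/-- Compatibility of a list of edges (written from range to source) with a final
source vertex: consecutive edges are composable and the last edge starts at the
given vertex. -/
def compat : List Γ.E → Γ.V → Prop
  | [], _ => True
  | [e], v => Γ.s e = v
  | e :: f :: rest, v => Γ.s e = Γ.r f ∧ compat (f :: rest) v

/-- A finite path in a graph: a composable list of edges together with its source
vertex (paths of length zero are vertices). -/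
structure FinPath where
  edges : List Γ.E
  src : Γ.V
  ok : Γ.compat edges src

/-- The range of a finite path. -/
def FinPath.rng (x : FinPath Γ) : Γ.V :=
  match x.edges with
  | [] => x.src
  | e :: _ => Γ.r e

/-- A vertex regarded as a path of length zero. -/
def ofVtx (v : Γ.V) : FinPath Γ := ⟨[], v, trivial⟩

/-- An edge regarded as a path of length one. -/
def ofEdge (e : Γ.E) : FinPath Γ := ⟨[e], Γ.s e, rfl⟩


theorem compat_append (L₁ L₂ : List Γ.E) (v w : Γ.V)
    (h1 : Γ.compat L₁ v) (h2 : Γ.compat L₂ w)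
    (hlink : v = (match L₂ with | [] => w | e :: _ => Γ.r e)) :
    Γ.compat (L₁ ++ L₂) w := by
  induction L₁ with
  | nil => simpa using h2
  | cons e L₁' ih =>
    cases L₁' with
    | nil =>
      cases L₂ with
      | nil =>
        show Γ.compat [e] w
        have : Γ.s e = v := h1
        simpa [compat] using this.trans hlink
      | cons f L₂' =>
        refine ⟨?_, h2⟩
        · simp only [compat] at h1
          exact h1.trans (by simpa using hlink)
    | cons f L₁'' =>
      obtain ⟨hef, hrest⟩ := h1
      exact ⟨hef, ih hrest⟩


theorem compat_append' (x y : FinPath Γ) (h : x.src = y.rng) :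
    Γ.compat (x.edges ++ y.edges) y.src := by
  obtain ⟨L, v, hc⟩ := y
  cases L with
  | nil => exact Γ.compat_append _ _ _ _ x.ok hc (by simpa [FinPath.rng] using h)
  | cons e tl => exact Γ.compat_append _ _ x.src _ x.ok hc (by simpa [FinPath.rng] using h)

/-- Concatenation of finite paths (`x.comp y` traverses `y` first, then `x`). -/
def FinPath.comp (x y : FinPath Γ) (h : x.src = y.rng) : FinPath Γ :=
  ⟨x.edges ++ y.edges, y.src, Γ.compat_append' x y h⟩

/-- `x ⪯ x'`: `x` is an initial segment of `x'`, that is, `x' = x y`. -/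
def IsPrefix (x x' : FinPath Γ) : Prop :=
  ∃ (y : FinPath Γ) (h : x.src = y.rng), x' = FinPath.comp Γ x y h

/-- An infinite path: a sequence of composable edges, written from range to
source. -/
structure InfPath where
  seq : ℕ → Γ.E
  ok : ∀ n, Γ.s (seq n) = Γ.r (seq (n + 1))

/-- A boundary path: a finite path whose source is a singular vertex, or an
infinite path. -/
inductive BPath where
  | fin : (p : FinPath Γ) → ¬ Γ.Regular p.src → BPath
  | inf : InfPath Γ → BPath

/-- The range of a boundary path. -/
def BPath.rng : BPath Γ → Γ.V
  | .fin p _ => p.rng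
  | .inf p => Γ.r (p.seq 0)

/-- Prepend a finite list of edges to an infinite edge sequence. -/
def prependSeq (L : List Γ.E) (σ : ℕ → Γ.E) : ℕ → Γ.E :=
  fun n => if h : n < L.length then L.get ⟨n, h⟩ else σ (n - L.length)


theorem compat_get : ∀ (L : List Γ.E) (v : Γ.V), Γ.compat L v →
    ∀ (i : ℕ) (hi : i + 1 < L.length),
      Γ.s (L.get ⟨i, Nat.lt_of_succ_lt hi⟩) = Γ.r (L.get ⟨i + 1, hi⟩)
  | [], v, hc, i, hi => by simp at hi
  | [e], v, hc, i, hi => by simp at hi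
  | e :: f :: rest, v, hc, 0, hi => hc.1
  | e :: f :: rest, v, hc, (m+1), hi =>
      compat_get (f :: rest) v hc.2 m (by simpa using hi)

theorem compat_last : ∀ (L : List Γ.E) (v : Γ.V), Γ.compat L v →
    ∀ (h : 0 < L.length), Γ.s (L.get ⟨L.length - 1, by omega⟩) = v
  | [], v, hc, h => by simp at h
  | [e], v, hc, h => hc
  | e :: f :: rest, v, hc, h =>
      compat_last (f :: rest) v hc.2 (by simp)

theorem prependSeq_ok (L : List Γ.E) (v : Γ.V) (hc : Γ.compat L v)
    (σ : ℕ → Γ.E) (hσ : ∀ n, Γ.s (σ n) = Γ.r (σ (n + 1))) (hv : v = Γ.r (σ 0)) :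
    ∀ n, Γ.s (Γ.prependSeq L σ n) = Γ.r (Γ.prependSeq L σ (n + 1)) := by
  intro n
  unfold prependSeq
  by_cases h1 : n < L.length
  · by_cases h2 : n + 1 < L.length
    · rw [dif_pos h1, dif_pos h2]
      exact Γ.compat_get L v hc n h2
    · have hlen : n + 1 = L.length := by omega
      rw [dif_pos h1, dif_neg h2]
      have : n + 1 - L.length = 0 := by omega
      rw [this]
      have hlast := Γ.compat_last L v hc (by omega)
      have : (⟨n, h1⟩ : Fin L.length) = ⟨L.length - 1, by omega⟩ := by
        apply Fin.ext; simp; omega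
      rw [this, hlast, hv]
  · have h2 : ¬ (n + 1 < L.length) := by omega
    rw [dif_neg h1, dif_neg h2]
    have : n + 1 - L.length = (n - L.length) + 1 := by omega
    rw [this]
    exact hσ _

/-- Concatenation `x z` of a finite path `x` with a boundary path `z` with
`r(z) = s(x)`. -/
def BPath.cons (x : FinPath Γ) (z : BPath Γ) (h : x.src = z.rng) : BPath Γ :=
  match z, h with
  | .fin p hp, h =>
      .fin ⟨x.edges ++ p.edges, p.src, Γ.compat_append' x p h⟩ hp
  | .inf p, h => .inf ⟨Γ.prependSeq x.edges p.seq, Γ.prependSeq_ok x.edges x.src x.ok p.seq p.ok h⟩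

/-- The cylinder set `Z_x ⊆ ∂Γ` of boundary paths extending the finite path
`x`. -/
def cyl (x : FinPath Γ) : Set (BPath Γ) :=
  {z | ∃ (z' : BPath Γ) (h : x.src = z'.rng), z = BPath.cons Γ x z' h}

/-- The cylinder set `Z_v ⊆ ∂Γ` of boundary paths with range `v`. -/
def cylV (v : Γ.V) : Set (BPath Γ) := {z | z.rng = v}

/-- The cylinder topology on the boundary path space. -/
instance : TopologicalSpace (BPath Γ) :=
  TopologicalSpace.generateFrom
    {S | ∃ (x : FinPath Γ) (F : Set (FinPath Γ)), F.Finite ∧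
      S = Γ.cyl x \ ⋃ y ∈ F, Γ.cyl y}

/-- The arrows of the boundary path groupoid `G_Γ`: triples
`(x z, |x| - |y|, y z)`. -/
def GArr : Set (BPath Γ × ℤ × BPath Γ) :=
  {t | ∃ (x y : FinPath Γ) (z : BPath Γ) (hx : x.src = z.rng) (hy : y.src = z.rng),
    t.1 = BPath.cons Γ x z hx ∧ t.2.2 = BPath.cons Γ y z hy ∧
    t.2.1 = (x.edges.length : ℤ) - (y.edges.length : ℤ)}

/-- The arrow space of the boundary path groupoid. -/
def GArrT := {t : BPath Γ × ℤ × BPath Γ // t ∈ Γ.GArr}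

instance : TopologicalSpace (GArrT Γ) :=
  inferInstanceAs (TopologicalSpace {t : BPath Γ × ℤ × BPath Γ // t ∈ Γ.GArr})

/-- The range map of the boundary path groupoid. -/
def grng (t : GArrT Γ) : BPath Γ := t.val.1

/-- The source map of the boundary path groupoid. -/
def gsrc (t : GArrT Γ) : BPath Γ := t.val.2.2

/-- The basic compact-open bisection `Z(x,y)` of the boundary path groupoid. -/
def ZZ (x y : FinPath Γ) : Set (GArrT Γ) :=
  {t | ∃ (z : BPath Γ) (hx : x.src = z.rng) (hy : y.src = z.rng),
    t.val = (BPath.cons Γ x z hx,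
      (x.edges.length : ℤ) - (y.edges.length : ℤ), BPath.cons Γ y z hy)}

/-- The product of two subsets of the boundary path groupoid. -/
def gmul (A B : Set (GArrT Γ)) : Set (GArrT Γ) :=
  {c | ∃ a ∈ A, ∃ b ∈ B, a.val.2.2 = b.val.1 ∧
    c.val = (a.val.1, a.val.2.1 + b.val.2.1, b.val.2.2)}

/-- A subset of the boundary path space regarded as a subset of the unit space of
the boundary path groupoid. -/
def unitSet (S : Set (BPath Γ)) : Set (GArrT Γ) :=
  {t | t.val.2.1 = 0 ∧ t.val.1 = t.val.2.2 ∧ t.val.1 ∈ S}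

end DGraph

namespace DGraph

variable (Γ₁ Γ₂ : DGraph)

/-- A relation morphism between two graphs
(Definition 3.1 of Castro–D'Andrea–Hajac): a relation on finite path spaces whose
preimage of vertices consists of vertices and which preserves sources and
ranges. -/
structure IsRelMor (R : Set (FinPath Γ₁ × FinPath Γ₂)) : Prop where
  vtx : ∀ p ∈ R, p.2.edges = [] → p.1.edges = []
  src_mem : ∀ p ∈ R, (ofVtx Γ₁ p.1.src, ofVtx Γ₂ p.2.src) ∈ R
  rng_mem : ∀ p ∈ R, (ofVtx Γ₁ p.1.rng, ofVtx Γ₂ p.2.rng) ∈ R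

/-- Multiplicativity of a relation morphism. -/
def Multiplicative (R : Set (FinPath Γ₁ × FinPath Γ₂)) : Prop :=
  ∀ (x : FinPath Γ₁) (y : FinPath Γ₂) (x' : FinPath Γ₁) (y' : FinPath Γ₂)
    (hx : x.src = x'.rng) (hy : y.src = y'.rng),
    (x, y) ∈ R → (x', y') ∈ R → (FinPath.comp Γ₁ x x' hx, FinPath.comp Γ₂ y y' hy) ∈ R

/-- Decomposability of a relation morphism. -/
def Decomposable (R : Set (FinPath Γ₁ × FinPath Γ₂)) : Prop :=
  ∀ (y y' : FinPath Γ₂) (h : y.src = y'.rng) (xb : FinPath Γ₁),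
    (xb, FinPath.comp Γ₂ y y' h) ∈ R → ∃ (x x' : FinPath Γ₁) (hx : x.src = x'.rng),
      (x, y) ∈ R ∧ (x', y') ∈ R ∧ FinPath.comp Γ₁ x x' hx = xb

/-- Properness of a relation morphism: all preimages are finite. -/
def ProperRel (R : Set (FinPath Γ₁ × FinPath Γ₂)) : Prop :=
  ∀ y : FinPath Γ₂, {x | (x, y) ∈ R}.Finite

/-- Vertex disjointness of a relation morphism. -/
def VertexDisjoint (R : Set (FinPath Γ₁ × FinPath Γ₂)) : Prop :=
  ∀ v v' : Γ₂.V, v ≠ v' →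
    {x | (x, ofVtx Γ₂ v) ∈ R} ∩ {x | (x, ofVtx Γ₂ v') ∈ R} = ∅

/-- Source bijectivity of a relation morphism. -/
def SourceBijective (R : Set (FinPath Γ₁ × FinPath Γ₂)) : Prop :=
  ∀ f : Γ₂.E,
    Set.BijOn (fun x : FinPath Γ₁ => ofVtx Γ₁ x.src)
      {x | (x, ofEdge Γ₂ f) ∈ R} {x | (x, ofVtx Γ₂ (Γ₂.s f)) ∈ R}

/-- Monotonicity of a relation morphism. -/
def MonotoneRel (R : Set (FinPath Γ₁ × FinPath Γ₂)) : Prop :=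
  ∀ (x x' : FinPath Γ₁) (f f' : Γ₂.E),
    (x, ofEdge Γ₂ f) ∈ R → (x', ofEdge Γ₂ f') ∈ R →
    (IsPrefix Γ₁ x x' ∨ IsPrefix Γ₁ x' x) → x = x' ∧ f = f'

/-- Regularity of a relation morphism. -/
def RegularRel (R : Set (FinPath Γ₁ × FinPath Γ₂)) : Prop :=
  ∀ v : Γ₂.V, Γ₂.Regular v →
    ∀ u : Γ₁.V, (ofVtx Γ₁ u, ofVtx Γ₂ v) ∈ R →
      ∀ x : FinPath Γ₁, x.rng = u → ∃ (f : Γ₂.E) (x' : FinPath Γ₁),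
        Γ₂.r f = v ∧ (x', ofEdge Γ₂ f) ∈ R ∧
        (IsPrefix Γ₁ x x' ∨ IsPrefix Γ₁ x' x)

/-- An admissible relation morphism
(Definition 6.5 of Castro–D'Andrea–Hajac). -/
structure IsAdmissible (R : Set (FinPath Γ₁ × FinPath Γ₂)) : Prop where
  relMor : IsRelMor Γ₁ Γ₂ R
  mult : Multiplicative Γ₁ Γ₂ R
  decomp : Decomposable Γ₁ Γ₂ R
  proper : ProperRel Γ₁ Γ₂ R
  vdisj : VertexDisjoint Γ₁ Γ₂ R
  sbij : SourceBijective Γ₁ Γ₂ R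
  mono : MonotoneRel Γ₁ Γ₂ R
  regular : RegularRel Γ₁ Γ₂ R

/-- The vertex sets `Ω_v = ⋃_{u ∈ R⁻¹(v)} Z_u` associated to a relation
morphism. -/
def relΩ (R : Set (FinPath Γ₁ × FinPath Γ₂)) (v : Γ₂.V) : Set (BPath Γ₁) :=
  ⋃ u ∈ {u : Γ₁.V | (ofVtx Γ₁ u, ofVtx Γ₂ v) ∈ R}, cylV Γ₁ u

/-- The bisections `T_f = ⋃_{x ∈ R⁻¹(f)} Z(x, s(x))` associated to a relation
morphism. -/
def relT (R : Set (FinPath Γ₁ × FinPath Γ₂)) (f : Γ₂.E) : Set (GArrT Γ₁) :=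
  ⋃ x ∈ {x : FinPath Γ₁ | (x, ofEdge Γ₂ f) ∈ R}, ZZ Γ₁ x (ofVtx Γ₁ x.src)

/-- A dynamical Cuntz--Krieger `Γ₂`-family in the boundary path groupoid
`G_{Γ₁}`. -/
structure IsDCKb (Ω : Γ₂.V → Set (BPath Γ₁)) (T : Γ₂.E → Set (GArrT Γ₁)) :
    Prop where
  compact_Ω : ∀ v, IsCompact (Ω v)
  open_Ω : ∀ v, IsOpen (Ω v)
  compact_T : ∀ f, IsCompact (T f)
  open_T : ∀ f, IsOpen (T f)
  inj_r : ∀ f, Set.InjOn (grng Γ₁) (T f)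
  inj_s : ∀ f, Set.InjOn (gsrc Γ₁) (T f)
  disj : ∀ v w, v ≠ w → Ω v ∩ Ω w = ∅
  src_eq : ∀ f, gsrc Γ₁ '' T f = Ω (Γ₂.s f)
  rng_sub : ∀ f, grng Γ₁ '' T f ⊆ Ω (Γ₂.r f)
  rng_disj : ∀ f g, f ≠ g → grng Γ₁ '' T f ∩ grng Γ₁ '' T g = ∅
  reg : ∀ v, Γ₂.Regular v → (⋃ f ∈ {f | Γ₂.r f = v}, grng Γ₁ '' T f) = Ω v

end DGraph

open DGraph in
lemma DGraph.cons_ofVtx (Γ : DGraph) (v : Γ.V) (z : BPath Γ)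
    (h : (ofVtx Γ v).src = z.rng) :
    BPath.cons Γ (ofVtx Γ v) z h = z := by
  cases z with
  | fin p hp =>
    show BPath.fin ⟨[] ++ p.edges, p.src, _⟩ hp = BPath.fin p hp
    cases p; rfl
  | inf p =>
    show BPath.inf ⟨Γ.prependSeq [] p.seq, _⟩ = BPath.inf p
    cases p with
    | mk σ ok =>
      have : Γ.prependSeq [] σ = σ := by
        funext n; simp [DGraph.prependSeq]
      congr 1

open DGraph in
lemma DGraph.unit_mem (Γ : DGraph) (z : BPath Γ) : (z, (0:ℤ), z) ∈ Γ.GArr := by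
  refine ⟨ofVtx Γ z.rng, ofVtx Γ z.rng, z, rfl, rfl, ?_, ?_, by simp [ofVtx]⟩
  · exact (DGraph.cons_ofVtx Γ _ z rfl).symm
  · exact (DGraph.cons_ofVtx Γ _ z rfl).symm

open DGraph in
/-- Computation of the product `T_f Z_u` as a union. -/
lemma DGraph.gmul_relT_unit (Γ₁ Γ₂ : DGraph)
    (R : Set (FinPath Γ₁ × FinPath Γ₂)) (u : Γ₁.V) (f : Γ₂.E) :
    gmul Γ₁ (relT Γ₁ Γ₂ R f) (unitSet Γ₁ (cylV Γ₁ u)) =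
      ⋃ x ∈ {x : FinPath Γ₁ | (x, ofEdge Γ₂ f) ∈ R ∧ x.src = u},
        ZZ Γ₁ x (ofVtx Γ₁ x.src) := by
  ext c
  constructor
  · rintro ⟨a, ha, b, ⟨hb0, hb1, hbu⟩, hab, hc⟩
    rw [relT, Set.mem_iUnion₂] at ha
    obtain ⟨x, hxR, z, hx, hy, haval⟩ := ha
    have hz : a.val.2.2 = z := by
      rw [haval]; exact DGraph.cons_ofVtx Γ₁ _ z hy
    have hzb : z = a.val.2.2 := hz.symm
    have hzu : z.rng = u := by
      rw [hzb, hab]; exact hbu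
    have hsrc : x.src = u := hx.trans hzu
    refine Set.mem_iUnion₂.2 ⟨x, ⟨hxR, hsrc⟩, z, hx, hy, ?_⟩
    have hb22 : b.val.2.2 = BPath.cons Γ₁ (ofVtx Γ₁ x.src) z hy := by
      rw [← hb1, ← hab, haval]
    rw [hc, haval, hb0, hb22]
    simp
  · intro hc
    rw [Set.mem_iUnion₂] at hc
    obtain ⟨x, ⟨hxR, hsrc⟩, z, hx, hy, hcval⟩ := hc
    refine ⟨c, ?_, ⟨(z, 0, z), DGraph.unit_mem Γ₁ z⟩, ⟨rfl, rfl, ?_⟩, ?_, ?_⟩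
    · rw [relT, Set.mem_iUnion₂]
      exact ⟨x, hxR, z, hx, hy, hcval⟩
    · show z.rng = u
      rw [← hx, hsrc]
    · show c.val.2.2 = z
      rw [hcval]; exact DGraph.cons_ofVtx Γ₁ _ z hy
    · rw [hcval]
      refine Prod.ext rfl (Prod.ext (by simp) ?_)
      exact (DGraph.cons_ofVtx Γ₁ _ z hy)

open DGraph in
/-- The dynamical Cuntz--Krieger family associated to an admissible relation
morphism satisfies: (a) each `Z_u` is either disjoint from or contained in each
`Ω_v`; and (b) each product `T_f Z_u` is either empty or of the form
`Z(x, s(x))` for a finite path `x`. -/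
theorem admissible_dCK_extra_conditions (Γ₁ Γ₂ : DGraph)
    (R : Set (FinPath Γ₁ × FinPath Γ₂)) (hR : IsAdmissible Γ₁ Γ₂ R) :
    (∀ (u : Γ₁.V) (v : Γ₂.V),
      cylV Γ₁ u ∩ relΩ Γ₁ Γ₂ R v = ∅ ∨ cylV Γ₁ u ⊆ relΩ Γ₁ Γ₂ R v) ∧
    (∀ (u : Γ₁.V) (f : Γ₂.E),
      gmul Γ₁ (relT Γ₁ Γ₂ R f) (unitSet Γ₁ (cylV Γ₁ u)) = ∅ ∨
      ∃ x : FinPath Γ₁,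
        gmul Γ₁ (relT Γ₁ Γ₂ R f) (unitSet Γ₁ (cylV Γ₁ u))
          = ZZ Γ₁ x (ofVtx Γ₁ x.src)) := by
  constructor
  · intro u v
    by_cases h : (ofVtx Γ₁ u, ofVtx Γ₂ v) ∈ R
    · right
      intro z hz
      exact Set.mem_biUnion h hz
    · left
      ext z
      simp only [Set.mem_inter_iff, relΩ, Set.mem_iUnion, cylV, Set.mem_setOf_eq,
        Set.mem_empty_iff_false, iff_false, not_and]
      rintro hzu ⟨u', hu', hzu'⟩
      have : u = u' := hzu.symm.trans hzu'
      subst this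
      exact h hu'
  · intro u f
    rw [DGraph.gmul_relT_unit Γ₁ Γ₂ R u f]
    by_cases h : ∃ x : FinPath Γ₁, (x, ofEdge Γ₂ f) ∈ R ∧ x.src = u
    · obtain ⟨x, hxR, hxu⟩ := h
      right
      refine ⟨x, ?_⟩
      apply Set.eq_of_subset_of_subset
      · refine Set.iUnion₂_subset ?_
        rintro x' ⟨hx'R, hx'u⟩
        have : x' = x := by
          apply (hR.sbij f).injOn hx'R hxR
          show ofVtx Γ₁ x'.src = ofVtx Γ₁ x.src
          rw [hx'u, hxu]
        rw [this]
      · exact Set.subset_iUnion₂ (s := fun x' _ => ZZ Γ₁ x' (ofVtx Γ₁ x'.src)) x ⟨hxR, hxu⟩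
    · left
      refine Set.eq_empty_of_forall_notMem fun c hc => ?_
      rw [Set.mem_iUnion₂] at hc
      obtain ⟨x, hx, -⟩ := hc
      exact h ⟨x, hx⟩
end

section
/- Let (Ω_v)_{v∈V₂}, (T_f)_{f∈E₂} be a dynamical Cuntz–Krieger Γ₂-family in the boundary path groupoid G_{Γ₁} satisfying: for all u ∈ V₁, v ∈ V₂, either Z_u Ω_v = ∅ or Z_u Ω_v = Z_u; and for all u ∈ V₁, f ∈ E₂, either T_f Z_u = ∅ or T_f Z_u = Z(x, s(x)) for some finite path x. Then there exists an admissible relation morphism R : Γ₁ → Γ₂ whose associated dynamical Cuntz–Krieger family equals (Ω_v), (T_f). The relation is given on vertices by R⁰ = {(u,v) : Z_u Ω_v = Z_u} and on edges by R¹ = {(x,f) : T_f Z(s(x), x) = Z(x,x)}. -/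
/-! The two dichotomies pin the family down on cylinders: every `Ω_v` is a union of vertex
cylinders `Z_u`, and the part of `T_f` over `Z_u` is a single bisection `Z(x, s(x))`. Hence the
vertex relation `Z_u ⊆ Ω_v` and the edge relation `T_f Z_{s(x)} = Z(x, s(x))` recover `Ω` and
`T`; extending them to longer paths of `Γ₂` by concatenation makes the relation multiplicative and
decomposable. Since every `Z_u` is nonempty (follow incoming edges until a singular vertex is
reached, or forever), single boundary paths witness the remaining conditions: properness comes
from the compactness of `Ω_v`, covered by the disjoint open cylinders `Z_u`; source bijectivity
and monotonicity from the injectivity of the source and range maps on each `T_f` and the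
disjointness of their ranges; regularity from the Cuntz–Krieger relation
`Ω_v = ⋃_{r(f) = v} r(T_f)`. -/

theorem List.exists_eq_append_of_append_eq_append {α : Type*} {A A' l l' : List α}
    (h : A ++ l = A' ++ l') (hlen : A.length ≤ A'.length) :
    ∃ D, A' = A ++ D ∧ l = D ++ l' := by
  rcases List.append_eq_append_iff.mp h with ⟨D, hA', hl⟩ | ⟨D, hA, hl'⟩
  · exact ⟨D, hA', hl⟩
  · obtain rfl : D = [] := by simpa [hA] using hlen
    exact ⟨[], by simp [hA], by simp [hl']⟩

namespace DGraph

section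

variable {Γ : DGraph}

@[ext] theorem FinPath.ext {x y : FinPath Γ} (h₁ : x.edges = y.edges) (h₂ : x.src = y.src) :
    x = y := by
  cases x; cases y; cases h₁; cases h₂; rfl

@[ext] theorem InfPath.ext {p q : InfPath Γ} (h : p.seq = q.seq) : p = q := by
  cases p; cases q; cases h; rfl

@[simp] theorem ofVtx_edges (u : Γ.V) : (ofVtx Γ u).edges = [] := rfl
@[simp] theorem ofVtx_rng (u : Γ.V) : (ofVtx Γ u).rng = u := rfl

@[simp] theorem FinPath.comp_edges (x y : FinPath Γ) (h : x.src = y.rng) :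
    (FinPath.comp Γ x y h).edges = x.edges ++ y.edges := rfl

@[simp] theorem FinPath.comp_src (x y : FinPath Γ) (h : x.src = y.rng) :
    (FinPath.comp Γ x y h).src = y.src := rfl

theorem FinPath.rng_of_edges_nil {x : FinPath Γ} (h : x.edges = []) : x.rng = x.src := by
  unfold FinPath.rng; rw [h]

theorem FinPath.rng_of_edges_cons {x : FinPath Γ} {e : Γ.E} {L : List Γ.E}
    (h : x.edges = e :: L) : x.rng = Γ.r e := by
  unfold FinPath.rng; rw [h]

theorem FinPath.eq_ofVtx_of_edges_nil {x : FinPath Γ} (h : x.edges = []) : x = ofVtx Γ x.src :=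
  FinPath.ext h rfl

@[simp] theorem FinPath.comp_rng (x y : FinPath Γ) (h : x.src = y.rng) :
    (FinPath.comp Γ x y h).rng = x.rng := by
  rcases hx : x.edges with _ | ⟨e, L⟩
  · rw [FinPath.rng_of_edges_nil hx, h]
    rcases hy : y.edges with _ | ⟨f, M⟩
    · rw [FinPath.rng_of_edges_nil (by simp [hx, hy]), FinPath.rng_of_edges_nil hy, comp_src]
    · rw [FinPath.rng_of_edges_cons (e := f) (L := M) (by simp [hx, hy]),
        FinPath.rng_of_edges_cons hy]
  · rw [FinPath.rng_of_edges_cons (e := e) (L := L ++ y.edges) (by simp [hx]),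
      FinPath.rng_of_edges_cons hx]

theorem FinPath.comp_of_edges_nil_left {x y : FinPath Γ} (hx : x.edges = []) (h : x.src = y.rng) :
    FinPath.comp Γ x y h = y :=
  FinPath.ext (by simp [hx]) rfl

theorem FinPath.comp_of_edges_nil_right {x y : FinPath Γ} (hy : y.edges = []) (h : x.src = y.rng) :
    FinPath.comp Γ x y h = x :=
  FinPath.ext (by simp [hy]) (by rw [comp_src, h, FinPath.rng_of_edges_nil hy])

theorem FinPath.comp_assoc (x y z : FinPath Γ) (h₁ : x.src = y.rng) (h₂ : y.src = z.rng)
    (h₃ : (FinPath.comp Γ x y h₁).src = z.rng) (h₄ : x.src = (FinPath.comp Γ y z h₂).rng) :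
    FinPath.comp Γ (FinPath.comp Γ x y h₁) z h₃ = FinPath.comp Γ x (FinPath.comp Γ y z h₂) h₄ :=
  FinPath.ext (by simp) rfl

theorem FinPath.edges_src_injective :
    Function.Injective fun x : FinPath Γ => (x.edges, x.src) :=
  fun _ _ h => FinPath.ext (congrArg Prod.fst h) (congrArg Prod.snd h)

theorem compat_of_append_right {L₁ L₂ : List Γ.E} {v : Γ.V} (h : Γ.compat (L₁ ++ L₂) v) :
    Γ.compat L₂ v := by
  induction L₁ with
  | nil => exact h
  | cons e L ih =>
    apply ih
    rcases hL : L ++ L₂ with _ | ⟨f, M⟩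
    · trivial
    · rw [List.cons_append, hL] at h
      exact h.2

@[simp] theorem prependSeq_nil (σ : ℕ → Γ.E) : Γ.prependSeq [] σ = σ := by
  funext n; simp [prependSeq]

theorem prependSeq_of_lt {L : List Γ.E} (σ : ℕ → Γ.E) {n : ℕ} (h : n < L.length) :
    Γ.prependSeq L σ n = L[n] := dif_pos h

theorem prependSeq_of_le {L : List Γ.E} (σ : ℕ → Γ.E) {n : ℕ} (h : L.length ≤ n) :
    Γ.prependSeq L σ n = σ (n - L.length) := dif_neg (by omega)

theorem prependSeq_append (L₁ L₂ : List Γ.E) (σ : ℕ → Γ.E) :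
    Γ.prependSeq (L₁ ++ L₂) σ = Γ.prependSeq L₁ (Γ.prependSeq L₂ σ) := by
  funext n
  by_cases h₁ : n < L₁.length
  · rw [prependSeq_of_lt _ h₁, prependSeq_of_lt _ (by simp; omega), List.getElem_append_left h₁]
  · rw [prependSeq_of_le _ (L := L₁) (by omega)]
    by_cases h₂ : n < L₁.length + L₂.length
    · rw [prependSeq_of_lt _ (by simp; omega), prependSeq_of_lt _ (by omega),
        List.getElem_append_right (by omega)]
    · rw [prependSeq_of_le _ (by simp; omega), prependSeq_of_le _ (by omega)]
      congr 1; simp only [List.length_append]; omega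

theorem prependSeq_left_cancel {L : List Γ.E} {σ σ' : ℕ → Γ.E}
    (h : Γ.prependSeq L σ = Γ.prependSeq L σ') : σ = σ' := by
  funext n
  simpa [prependSeq_of_le _ (Nat.le_add_left L.length n)] using congrFun h (n + L.length)

theorem exists_eq_append_of_prependSeq_eq {A A' : List Γ.E} {σ σ' : ℕ → Γ.E}
    (h : Γ.prependSeq A σ = Γ.prependSeq A' σ') (hlen : A.length ≤ A'.length) :
    ∃ D, A' = A ++ D ∧ σ = Γ.prependSeq D σ' := by
  have hA : A = A'.take A.length := List.ext_getElem (by simp; omega) fun i hi hi' => by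
    have := congrFun h i
    rw [prependSeq_of_lt _ hi, prependSeq_of_lt _ (by omega)] at this
    rw [this, List.getElem_take]
  have hA' : A' = A ++ A'.drop A.length := by
    conv_lhs => rw [← List.take_append_drop A.length A', ← hA]
  refine ⟨_, hA', prependSeq_left_cancel (L := A) ?_⟩
  rwa [← prependSeq_append, ← hA']

theorem BPath.fin_congr {p q : FinPath Γ} {hp : ¬ Γ.Regular p.src} {hq : ¬ Γ.Regular q.src}
    (h : p = q) : BPath.fin p hp = BPath.fin q hq := by
  subst h; rfl

@[simp] theorem BPath.cons_rng (x : FinPath Γ) (z : BPath Γ) (h : x.src = z.rng) :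
    (BPath.cons Γ x z h).rng = x.rng := by
  rcases x with ⟨_ | ⟨e, L⟩, v, hc⟩
  · cases z with
    | fin p hp => exact h.symm
    | inf p => exact (congrArg Γ.r (congrFun (prependSeq_nil p.seq) 0)).trans h.symm
  · cases z with
    | fin p hp => rfl
    | inf p => exact congrArg Γ.r (prependSeq_of_lt p.seq (L := e :: L) (Nat.succ_pos _))

@[simp] theorem BPath.cons_of_edges_nil {x : FinPath Γ} (hx : x.edges = []) (z : BPath Γ)
    (h : x.src = z.rng) : BPath.cons Γ x z h = z := by
  cases z with
  | fin p hp => exact BPath.fin_congr (FinPath.ext (by simp [hx]) rfl)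
  | inf p => exact congrArg BPath.inf (InfPath.ext (by simp [hx]))

theorem BPath.cons_comp (x y : FinPath Γ) (z : BPath Γ) (h₁ : x.src = y.rng)
    (h₂ : y.src = z.rng) (h₃ : (FinPath.comp Γ x y h₁).src = z.rng)
    (h₄ : x.src = (BPath.cons Γ y z h₂).rng) :
    BPath.cons Γ (FinPath.comp Γ x y h₁) z h₃ = BPath.cons Γ x (BPath.cons Γ y z h₂) h₄ := by
  cases z with
  | fin p hp => exact BPath.fin_congr (FinPath.ext (by simp) rfl)
  | inf p => exact congrArg BPath.inf (InfPath.ext (prependSeq_append x.edges y.edges p.seq))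

theorem BPath.cons_eq_cons_of_length_le {x x' : FinPath Γ} {z z' : BPath Γ}
    {h : x.src = z.rng} {h' : x'.src = z'.rng}
    (heq : BPath.cons Γ x z h = BPath.cons Γ x' z' h')
    (hlen : x.edges.length ≤ x'.edges.length) :
    ∃ (y : FinPath Γ) (hxy : x.src = y.rng) (hyz : y.src = z'.rng),
      x' = FinPath.comp Γ x y hxy ∧ z = BPath.cons Γ y z' hyz := by
  obtain ⟨D, hD, hz⟩ : ∃ D, x'.edges = x.edges ++ D ∧
      ∀ hc : Γ.compat D x'.src, z = BPath.cons Γ ⟨D, x'.src, hc⟩ z' h' := by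
    cases z with
    | fin p hp =>
      cases z' with
      | fin p' hp' =>
        simp only [BPath.cons, BPath.fin.injEq, FinPath.mk.injEq] at heq
        obtain ⟨D, hD, hp⟩ := List.exists_eq_append_of_append_eq_append heq.1 hlen
        exact ⟨D, hD, fun _ => BPath.fin_congr (FinPath.ext hp heq.2)⟩
      | inf p' => cases heq
    | inf p =>
      cases z' with
      | fin p' hp' => cases heq
      | inf p' =>
        simp only [BPath.cons, BPath.inf.injEq, InfPath.mk.injEq] at heq
        obtain ⟨D, hD, hp⟩ := exists_eq_append_of_prependSeq_eq heq hlen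
        exact ⟨D, hD, fun _ => congrArg BPath.inf (InfPath.ext hp)⟩
  have hc : Γ.compat D x'.src := compat_of_append_right (hD ▸ x'.ok)
  have hxy : x.src = FinPath.rng Γ ⟨D, x'.src, hc⟩ := by rw [h, hz hc, BPath.cons_rng]
  exact ⟨_, hxy, h', FinPath.ext hD rfl, hz hc⟩

theorem BPath.cons_inj_of_length_eq {x x' : FinPath Γ} {z z' : BPath Γ}
    {h : x.src = z.rng} {h' : x'.src = z'.rng}
    (heq : BPath.cons Γ x z h = BPath.cons Γ x' z' h')
    (hlen : x.edges.length = x'.edges.length) : x = x' ∧ z = z' := by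
  obtain ⟨y, hxy, hyz, rfl, rfl⟩ := BPath.cons_eq_cons_of_length_le heq hlen.le
  have hy : y.edges = [] := by simpa using hlen
  exact ⟨(FinPath.comp_of_edges_nil_right hy hxy).symm, BPath.cons_of_edges_nil hy z' hyz⟩

theorem BPath.cons_right_injective {x : FinPath Γ} {z z' : BPath Γ}
    {h : x.src = z.rng} {h' : x.src = z'.rng}
    (heq : BPath.cons Γ x z h = BPath.cons Γ x z' h') : z = z' :=
  (BPath.cons_inj_of_length_eq heq rfl).2

theorem isPrefix_of_cons_eq_cons {x x' : FinPath Γ} {z z' : BPath Γ}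
    {h : x.src = z.rng} {h' : x'.src = z'.rng}
    (heq : BPath.cons Γ x z h = BPath.cons Γ x' z' h')
    (hlen : x.edges.length ≤ x'.edges.length) : IsPrefix Γ x x' :=
  let ⟨y, hxy, _, hx', _⟩ := BPath.cons_eq_cons_of_length_le heq hlen
  ⟨y, hxy, hx'⟩

open Classical in
noncomputable def backwardVtxSeq (Γ : DGraph) (u : Γ.V) : ℕ → Γ.V
  | 0 => u
  | n + 1 =>
    if h : Γ.Regular (backwardVtxSeq Γ u n) then Γ.s h.2.choose else backwardVtxSeq Γ u n

theorem backwardVtxSeq_succ {u : Γ.V} {n : ℕ} (h : Γ.Regular (backwardVtxSeq Γ u n)) :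
    backwardVtxSeq Γ u (n + 1) = Γ.s h.2.choose := by
  simp only [backwardVtxSeq]; exact dif_pos h

theorem exists_finPath_backwardVtxSeq (u : Γ.V) :
    ∀ n, (∀ i < n, Γ.Regular (backwardVtxSeq Γ u i)) →
      ∃ p : FinPath Γ, p.rng = u ∧ p.src = backwardVtxSeq Γ u n
  | 0, _ => ⟨ofVtx Γ u, rfl, rfl⟩
  | n + 1, h => by
    obtain ⟨p, hpr, hps⟩ := exists_finPath_backwardVtxSeq u n fun i hi => h i (by omega)
    have hn := h n (by omega)
    have hlink : p.src = (ofEdge Γ hn.2.choose).rng := hps.trans hn.2.choose_spec.symm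
    exact ⟨FinPath.comp Γ p _ hlink, by simpa using hpr, (backwardVtxSeq_succ hn).symm⟩

theorem cylV_nonempty (u : Γ.V) : (cylV Γ u).Nonempty := by
  classical
  by_cases hall : ∀ n, Γ.Regular (backwardVtxSeq Γ u n)
  · have hseq : ∀ n, Γ.s (hall n).2.choose = Γ.r (hall (n + 1)).2.choose := fun n => by
      rw [(hall (n + 1)).2.choose_spec, backwardVtxSeq_succ (hall n)]
    exact ⟨.inf ⟨fun n => (hall n).2.choose, hseq⟩, (hall 0).2.choose_spec⟩
  · rw [not_forall] at hall
    obtain ⟨p, hpr, hps⟩ := exists_finPath_backwardVtxSeq u (Nat.find hall)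
      fun i hi => not_not.mp (Nat.find_min hall hi)
    exact ⟨.fin p (hps ▸ Nat.find_spec hall), hpr⟩

@[simp] theorem mem_cylV {z : BPath Γ} {u : Γ.V} : z ∈ cylV Γ u ↔ z.rng = u := Iff.rfl

theorem cylV_eq_cyl (u : Γ.V) : cylV Γ u = cyl Γ (ofVtx Γ u) := by
  ext z
  constructor
  · intro hz
    exact ⟨z, hz.symm, (BPath.cons_of_edges_nil rfl z hz.symm).symm⟩
  · rintro ⟨z', h, rfl⟩
    simp

theorem isOpen_cylV (u : Γ.V) : IsOpen (cylV Γ u) := by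
  rw [cylV_eq_cyl]
  exact TopologicalSpace.isOpen_generateFrom_of_mem ⟨ofVtx Γ u, ∅, Set.finite_empty, by simp⟩

theorem exists_mem_ZZ (x y : FinPath Γ) (z : BPath Γ) (hx : x.src = z.rng)
    (hy : y.src = z.rng) :
    ∃ t ∈ ZZ Γ x y, t.val = (BPath.cons Γ x z hx,
      (x.edges.length : ℤ) - y.edges.length, BPath.cons Γ y z hy) :=
  ⟨⟨_, x, y, z, hx, hy, rfl, rfl, rfl⟩, ⟨z, hx, hy, rfl⟩, rfl⟩

theorem exists_mem_ZZ_ofVtx (x : FinPath Γ) (z : BPath Γ) (hz : x.src = z.rng) :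
    ∃ t ∈ ZZ Γ x (ofVtx Γ x.src),
      t.val = (BPath.cons Γ x z hz, (x.edges.length : ℤ), z) := by
  obtain ⟨t, ht, htv⟩ := exists_mem_ZZ x (ofVtx Γ x.src) z hz hz
  refine ⟨t, ht, ?_⟩
  rw [htv, BPath.cons_of_edges_nil (x := ofVtx Γ x.src) rfl z hz]
  simp

theorem grng_mem_cylV_of_mem_ZZ {x y : FinPath Γ} {t : GArrT Γ} (ht : t ∈ ZZ Γ x y) :
    grng Γ t ∈ cylV Γ x.rng := by
  obtain ⟨z, hx, hy, hval⟩ := ht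
  simp [grng, hval]

theorem gsrc_mem_cylV_of_mem_ZZ {x y : FinPath Γ} {t : GArrT Γ} (ht : t ∈ ZZ Γ x y) :
    gsrc Γ t ∈ cylV Γ y.rng := by
  obtain ⟨z, hx, hy, hval⟩ := ht
  simp [gsrc, hval]

theorem eq_of_ZZ_eq {x x' y : FinPath Γ} (hs : x.src = y.src) (h : ZZ Γ x y = ZZ Γ x' y) :
    x = x' := by
  obtain ⟨z, hz⟩ := cylV_nonempty x.src
  obtain ⟨t, ht, htv⟩ := exists_mem_ZZ x y z hz.symm (hs ▸ hz.symm)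
  obtain ⟨z', hx', hy', hval⟩ := h ▸ ht
  rw [htv, Prod.mk.injEq, Prod.mk.injEq] at hval
  obtain rfl := BPath.cons_right_injective hval.2.2
  exact (BPath.cons_inj_of_length_eq hval.1 (by exact_mod_cast sub_left_inj.mp hval.2.1)).1

theorem unit_mem_GArr (w : BPath Γ) : (w, (0 : ℤ), w) ∈ GArr Γ :=
  have hw : BPath.cons Γ (ofVtx Γ w.rng) w rfl = w := BPath.cons_of_edges_nil rfl w rfl
  ⟨ofVtx Γ w.rng, ofVtx Γ w.rng, w, rfl, rfl, hw.symm, hw.symm, by simp⟩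

theorem gmul_unitSet (A : Set (GArrT Γ)) (S : Set (BPath Γ)) :
    gmul Γ A (unitSet Γ S) = A ∩ gsrc Γ ⁻¹' S := by
  ext c
  constructor
  · rintro ⟨a, ha, b, ⟨hb0, hbeq, hbS⟩, hlink, hc⟩
    obtain rfl : c = a := Subtype.ext (by rw [hc, hb0, ← hbeq, ← hlink, add_zero])
    exact ⟨ha, show c.val.2.2 ∈ S by rw [hlink]; exact hbS⟩
  · rintro ⟨ha, hs⟩
    exact ⟨c, ha, ⟨_, unit_mem_GArr (gsrc Γ c)⟩, ⟨rfl, rfl, hs⟩, rfl, by simp [gsrc]⟩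

theorem gmul_inter_gsrc_preimage {A B : Set (GArrT Γ)} {S : Set (BPath Γ)}
    (hB : ∀ b ∈ B, grng Γ b ∈ S) : gmul Γ (A ∩ gsrc Γ ⁻¹' S) B = gmul Γ A B := by
  ext c
  constructor
  · rintro ⟨a, ha, b, hb, hlink, hc⟩
    exact ⟨a, ha.1, b, hb, hlink, hc⟩
  · rintro ⟨a, ha, b, hb, hlink, hc⟩
    exact ⟨a, ⟨ha, show a.val.2.2 ∈ S from hlink ▸ hB b hb⟩, b, hb, hlink, hc⟩

theorem gmul_ZZ_ZZ {x y w : FinPath Γ} (hs : x.src = y.src) :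
    gmul Γ (ZZ Γ x y) (ZZ Γ y w) = ZZ Γ x w := by
  ext c
  constructor
  · rintro ⟨a, ⟨z, hx, hy, haval⟩, b, ⟨z', hy', hw, hbval⟩, hlink, hc⟩
    rw [haval, hbval] at hlink
    obtain rfl := BPath.cons_right_injective hlink
    exact ⟨z, hx, hw, by rw [hc, haval, hbval]; simp⟩
  · rintro ⟨z, hx, hw, hcval⟩
    have hy : y.src = z.rng := hs ▸ hx
    obtain ⟨a, ha, haval⟩ := exists_mem_ZZ x y z hx hy
    obtain ⟨b, hb, hbval⟩ := exists_mem_ZZ y w z hy hw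
    exact ⟨a, ha, b, hb, by rw [haval, hbval], by rw [hcval, haval, hbval]; simp⟩

end

variable {Γ₁ Γ₂ : DGraph} {Ω : Γ₂.V → Set (BPath Γ₁)} {T : Γ₂.E → Set (GArrT Γ₁)}

def CylDichotomy (Ω : Γ₂.V → Set (BPath Γ₁)) : Prop :=
  ∀ u v, cylV Γ₁ u ∩ Ω v = ∅ ∨ cylV Γ₁ u ∩ Ω v = cylV Γ₁ u

def BisectionDichotomy (T : Γ₂.E → Set (GArrT Γ₁)) : Prop :=
  ∀ u f, gmul Γ₁ (T f) (unitSet Γ₁ (cylV Γ₁ u)) = ∅ ∨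
    ∃ x : FinPath Γ₁, gmul Γ₁ (T f) (unitSet Γ₁ (cylV Γ₁ u)) = ZZ Γ₁ x (ofVtx Γ₁ x.src)

def vtxRel (Ω : Γ₂.V → Set (BPath Γ₁)) (u : Γ₁.V) (v : Γ₂.V) : Prop :=
  cylV Γ₁ u ⊆ Ω v

def edgeRel (T : Γ₂.E → Set (GArrT Γ₁)) (x : FinPath Γ₁) (f : Γ₂.E) : Prop :=
  T f ∩ gsrc Γ₁ ⁻¹' cylV Γ₁ x.src = ZZ Γ₁ x (ofVtx Γ₁ x.src)

theorem vtxRel_of_inter_nonempty (ha : CylDichotomy Ω) {u : Γ₁.V} {v : Γ₂.V}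
    (h : (cylV Γ₁ u ∩ Ω v).Nonempty) : vtxRel Ω u v := by
  rcases ha u v with h₀ | h₀
  · exact absurd (h₀ ▸ h) Set.not_nonempty_empty
  · exact Set.inter_eq_left.mp h₀

theorem finite_setOf_vtxRel {v : Γ₂.V} (hc : IsCompact (Ω v)) :
    {u : Γ₁.V | vtxRel Ω u v}.Finite := by
  obtain ⟨t, ht⟩ := hc.elim_finite_subcover (fun u => cylV Γ₁ u) isOpen_cylV
    fun z _ => Set.mem_iUnion.mpr ⟨z.rng, rfl⟩
  refine t.finite_toSet.subset fun u hu => ?_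
  obtain ⟨z, hz⟩ := cylV_nonempty u
  obtain ⟨u', hu', hz'⟩ := Set.mem_iUnion₂.mp (ht (hu hz))
  rwa [← mem_cylV.mp hz, mem_cylV.mp hz']

theorem ZZ_subset_of_edgeRel {x : FinPath Γ₁} {f : Γ₂.E} (h : edgeRel T x f) :
    ZZ Γ₁ x (ofVtx Γ₁ x.src) ⊆ T f :=
  h ▸ Set.inter_subset_left

theorem vtxRel_src_of_edgeRel {x : FinPath Γ₁} {f : Γ₂.E}
    (hsrc : gsrc Γ₁ '' T f ⊆ Ω (Γ₂.s f)) (h : edgeRel T x f) : vtxRel Ω x.src (Γ₂.s f) := by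
  intro z hz
  obtain ⟨t, ht, htv⟩ := exists_mem_ZZ_ofVtx x z (mem_cylV.mp hz).symm
  exact hsrc ⟨t, ZZ_subset_of_edgeRel h ht, by simp [gsrc, htv]⟩

theorem vtxRel_rng_of_edgeRel (ha : CylDichotomy Ω) {x : FinPath Γ₁} {f : Γ₂.E}
    (hrng : grng Γ₁ '' T f ⊆ Ω (Γ₂.r f)) (h : edgeRel T x f) : vtxRel Ω x.rng (Γ₂.r f) := by
  obtain ⟨z, hz⟩ := cylV_nonempty x.src
  obtain ⟨t, ht, htv⟩ := exists_mem_ZZ_ofVtx x z (mem_cylV.mp hz).symm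
  refine vtxRel_of_inter_nonempty ha ⟨grng Γ₁ t, ?_, hrng ⟨t, ZZ_subset_of_edgeRel h ht, rfl⟩⟩
  simp [grng, htv]

theorem edgeRel.eq_of_src_eq {x x' : FinPath Γ₁} {f : Γ₂.E} (h : edgeRel T x f)
    (h' : edgeRel T x' f) (hs : x.src = x'.src) : x = x' :=
  eq_of_ZZ_eq (y := ofVtx Γ₁ x.src) rfl (by rw [← h, hs]; exact h')

theorem exists_edgeRel_of_mem (hb : BisectionDichotomy T) {f : Γ₂.E} {a : GArrT Γ₁}
    (ha : a ∈ T f) :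
    ∃ x : FinPath Γ₁, edgeRel T x f ∧ x.src = (gsrc Γ₁ a).rng ∧
      a ∈ ZZ Γ₁ x (ofVtx Γ₁ x.src) := by
  have haS : a ∈ T f ∩ gsrc Γ₁ ⁻¹' cylV Γ₁ (gsrc Γ₁ a).rng := ⟨ha, rfl⟩
  rcases hb (gsrc Γ₁ a).rng f with h₀ | ⟨x, hx⟩
  · rw [gmul_unitSet] at h₀
    exact absurd (h₀ ▸ haS) (Set.notMem_empty a)
  · rw [gmul_unitSet] at hx
    have haZ : a ∈ ZZ Γ₁ x (ofVtx Γ₁ x.src) := hx ▸ haS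
    have hxa : (gsrc Γ₁ a).rng = x.src := gsrc_mem_cylV_of_mem_ZZ haZ
    rw [hxa] at hx
    exact ⟨x, hx, hxa.symm, haZ⟩

theorem gmul_eq_ZZ_of_edgeRel {x₀ x : FinPath Γ₁} {f : Γ₂.E} (h : edgeRel T x₀ f)
    (hs : x.src = x₀.src) : gmul Γ₁ (T f) (ZZ Γ₁ (ofVtx Γ₁ x.src) x) = ZZ Γ₁ x₀ x := by
  rw [← gmul_inter_gsrc_preimage fun b hb => grng_mem_cylV_of_mem_ZZ hb, ofVtx_rng, hs, h,
    gmul_ZZ_ZZ (x := x₀) (y := ofVtx Γ₁ x₀.src) rfl]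

theorem edgeRel_iff_gmul (hb : BisectionDichotomy T) {x : FinPath Γ₁} {f : Γ₂.E} :
    edgeRel T x f ↔ gmul Γ₁ (T f) (ZZ Γ₁ (ofVtx Γ₁ x.src) x) = ZZ Γ₁ x x := by
  refine ⟨fun h => gmul_eq_ZZ_of_edgeRel h rfl, fun hg => ?_⟩
  obtain ⟨z, hz⟩ := cylV_nonempty x.src
  obtain ⟨c, hc, -⟩ := exists_mem_ZZ x x z hz.symm hz.symm
  obtain ⟨a, ha, b, hb', hlink, -⟩ := hg ▸ hc
  obtain ⟨x₀, h₀, hs₀, -⟩ := exists_edgeRel_of_mem hb ha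
  have hs : x.src = x₀.src := by
    rw [hs₀, gsrc, hlink]
    exact (grng_mem_cylV_of_mem_ZZ hb').symm
  rwa [eq_of_ZZ_eq hs.symm ((gmul_eq_ZZ_of_edgeRel h₀ hs).symm.trans hg)] at h₀

theorem finite_setOf_edgeRel {f : Γ₂.E} (hc : IsCompact (Ω (Γ₂.s f)))
    (hsrc : gsrc Γ₁ '' T f ⊆ Ω (Γ₂.s f)) : {x : FinPath Γ₁ | edgeRel T x f}.Finite :=
  Set.Finite.of_finite_image
    ((finite_setOf_vtxRel hc).subset (Set.image_subset_iff.mpr fun _ => vtxRel_src_of_edgeRel hsrc))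
    fun _ hx _ hx' => edgeRel.eq_of_src_eq hx hx'

theorem edgeRel.eq_of_isPrefix (hinj : ∀ f, Set.InjOn (grng Γ₁) (T f))
    (hdisj : ∀ f g, f ≠ g → grng Γ₁ '' T f ∩ grng Γ₁ '' T g = ∅)
    {x x' : FinPath Γ₁} {f f' : Γ₂.E} (h : edgeRel T x f) (h' : edgeRel T x' f')
    (hpre : IsPrefix Γ₁ x x') : x = x' ∧ f = f' := by
  obtain ⟨y, hy, rfl⟩ := hpre
  obtain ⟨z', hz'⟩ := cylV_nonempty y.src
  have hxz : x.src = (BPath.cons Γ₁ y z' hz'.symm).rng := by rw [BPath.cons_rng]; exact hy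
  obtain ⟨t, ht, htv⟩ := exists_mem_ZZ_ofVtx x _ hxz
  obtain ⟨t', ht', htv'⟩ := exists_mem_ZZ_ofVtx (FinPath.comp Γ₁ x y hy) z' hz'.symm
  have hrng : grng Γ₁ t = grng Γ₁ t' := by
    simp only [grng, htv, htv', BPath.cons_comp x y z' hy hz'.symm hz'.symm hxz]
  obtain rfl : f = f' := by
    by_contra hne
    exact Set.eq_empty_iff_forall_notMem.mp (hdisj f f' hne) _
      ⟨⟨t, ZZ_subset_of_edgeRel h ht, rfl⟩, ⟨t', ZZ_subset_of_edgeRel h' ht', hrng.symm⟩⟩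
  have hlen := congrArg (fun t : GArrT Γ₁ => t.val.2.1)
    (hinj f (ZZ_subset_of_edgeRel h ht) (ZZ_subset_of_edgeRel h' ht') hrng)
  simp only [htv, htv', FinPath.comp_edges, List.length_append, Nat.cast_add,
    left_eq_add, Nat.cast_eq_zero, List.length_eq_zero_iff] at hlen
  exact ⟨(FinPath.comp_of_edges_nil_right hlen hy).symm, rfl⟩

theorem exists_edgeRel_of_vtxRel (hb : BisectionDichotomy T) {v : Γ₂.V}
    (hcover : Ω v ⊆ ⋃ f ∈ {f | Γ₂.r f = v}, grng Γ₁ '' T f) {u : Γ₁.V} (hu : vtxRel Ω u v)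
    {x : FinPath Γ₁} (hx : x.rng = u) :
    ∃ (f : Γ₂.E) (x' : FinPath Γ₁), Γ₂.r f = v ∧ edgeRel T x' f ∧
      (IsPrefix Γ₁ x x' ∨ IsPrefix Γ₁ x' x) := by
  obtain ⟨z, hz⟩ := cylV_nonempty x.src
  have hw : BPath.cons Γ₁ x z hz.symm ∈ Ω v := hu (by simp [hx])
  obtain ⟨f, hf, a, ha, haw⟩ := Set.mem_iUnion₂.mp (hcover hw)
  obtain ⟨x', h', -, z', hx', _, haval⟩ := exists_edgeRel_of_mem hb ha
  have hcons : BPath.cons Γ₁ x' z' hx' = BPath.cons Γ₁ x z hz.symm := by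
    rw [← haw, grng, haval]
  refine ⟨f, x', hf, h', ?_⟩
  rcases le_total x'.edges.length x.edges.length with hle | hle
  · exact Or.inr (isPrefix_of_cons_eq_cons hcons hle)
  · exact Or.inl (isPrefix_of_cons_eq_cons hcons.symm hle)

def pathRel (Ω : Γ₂.V → Set (BPath Γ₁)) (T : Γ₂.E → Set (GArrT Γ₁)) :
    FinPath Γ₁ → List Γ₂.E → Γ₂.V → Prop
  | x, [], v => x.edges = [] ∧ vtxRel Ω x.src v
  | x, f :: L, v => ∃ (x₁ x₂ : FinPath Γ₁) (h : x₁.src = x₂.rng),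
      edgeRel T x₁ f ∧ pathRel Ω T x₂ L v ∧ x = FinPath.comp Γ₁ x₁ x₂ h

def ckRel (Ω : Γ₂.V → Set (BPath Γ₁)) (T : Γ₂.E → Set (GArrT Γ₁)) :
    Set (FinPath Γ₁ × FinPath Γ₂) :=
  {p | pathRel Ω T p.1 p.2.edges p.2.src}

theorem vtxRel_src_of_pathRel {x : FinPath Γ₁} {L : List Γ₂.E} {v : Γ₂.V}
    (h : pathRel Ω T x L v) : vtxRel Ω x.src v := by
  induction L generalizing x with
  | nil => exact h.2
  | cons f L ih =>
    obtain ⟨x₁, x₂, hx, -, h₂, rfl⟩ := h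
    exact ih (x := x₂) h₂

theorem vtxRel_rng_of_pathRel (ha : CylDichotomy Ω) (hrng : ∀ f, grng Γ₁ '' T f ⊆ Ω (Γ₂.r f))
    {x : FinPath Γ₁} {y : FinPath Γ₂} (h : pathRel Ω T x y.edges y.src) :
    vtxRel Ω x.rng y.rng := by
  rcases hy : y.edges with _ | ⟨f, L⟩ <;> rw [hy] at h
  · rw [FinPath.rng_of_edges_nil h.1, FinPath.rng_of_edges_nil hy]
    exact h.2
  · obtain ⟨x₁, x₂, hx, h₁, -, rfl⟩ := h
    rw [FinPath.comp_rng, FinPath.rng_of_edges_cons hy]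
    exact vtxRel_rng_of_edgeRel ha (hrng f) h₁

theorem pathRel_comp {x x' : FinPath Γ₁} {L L' : List Γ₂.E} {v v' : Γ₂.V}
    (h : pathRel Ω T x L v) (h' : pathRel Ω T x' L' v') (hx : x.src = x'.rng) :
    pathRel Ω T (FinPath.comp Γ₁ x x' hx) (L ++ L') v' := by
  induction L generalizing x with
  | nil => rwa [FinPath.comp_of_edges_nil_left h.1]
  | cons f L ih =>
    obtain ⟨x₁, x₂, h₁₂, h₁, h₂, rfl⟩ := h
    have h₂' : x₂.src = x'.rng := hx
    exact ⟨x₁, FinPath.comp Γ₁ x₂ x' h₂', by rwa [FinPath.comp_rng], h₁, ih h₂ h₂',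
      FinPath.comp_assoc _ _ _ _ _ _ _⟩

theorem exists_pathRel_of_pathRel_append (ha : CylDichotomy Ω)
    (hrng : ∀ f, grng Γ₁ '' T f ⊆ Ω (Γ₂.r f)) (L : List Γ₂.E) (y : FinPath Γ₂)
    {x : FinPath Γ₁} (h : pathRel Ω T x (L ++ y.edges) y.src) :
    ∃ (x₁ x₂ : FinPath Γ₁) (hx : x₁.src = x₂.rng), pathRel Ω T x₁ L y.rng ∧
      pathRel Ω T x₂ y.edges y.src ∧ FinPath.comp Γ₁ x₁ x₂ hx = x := by
  induction L generalizing x with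
  | nil =>
    exact ⟨ofVtx Γ₁ x.rng, x, rfl, ⟨rfl, vtxRel_rng_of_pathRel ha hrng h⟩, h,
      FinPath.comp_of_edges_nil_left rfl rfl⟩
  | cons f L ih =>
    obtain ⟨x₁, x₂, h₁₂, h₁, h₂, rfl⟩ := h
    obtain ⟨x₃, x₄, h₃₄, h₃, h₄, rfl⟩ := ih h₂
    have h₁₃ : x₁.src = x₃.rng := by rwa [FinPath.comp_rng] at h₁₂
    exact ⟨FinPath.comp Γ₁ x₁ x₃ h₁₃, x₄, h₃₄, ⟨x₁, x₃, h₁₃, h₁, h₃, rfl⟩, h₄,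
      FinPath.comp_assoc _ _ _ _ _ _ _⟩

theorem finite_setOf_pathRel (hc : ∀ v, IsCompact (Ω v))
    (hsrc : ∀ f, gsrc Γ₁ '' T f ⊆ Ω (Γ₂.s f)) :
    ∀ (L : List Γ₂.E) (v : Γ₂.V), {x : FinPath Γ₁ | pathRel Ω T x L v}.Finite
  | [], v => ((finite_setOf_vtxRel (hc v)).image (ofVtx Γ₁)).subset
      fun x hx => ⟨x.src, hx.2, (FinPath.eq_ofVtx_of_edges_nil hx.1).symm⟩
  | f :: L, v => by
    refine Set.Finite.of_finite_image ?_ FinPath.edges_src_injective.injOn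
    refine (((finite_setOf_edgeRel (hc _) (hsrc f)).prod (finite_setOf_pathRel hc hsrc L v)).image
      fun q => (q.1.edges ++ q.2.edges, q.2.src)).subset ?_
    rintro _ ⟨_, ⟨x₁, x₂, -, h₁, h₂, rfl⟩, rfl⟩
    exact ⟨(x₁, x₂), ⟨h₁, h₂⟩, rfl⟩

theorem pathRel_singleton_iff {f : Γ₂.E} (hsrc : gsrc Γ₁ '' T f ⊆ Ω (Γ₂.s f))
    {x : FinPath Γ₁} : pathRel Ω T x [f] (Γ₂.s f) ↔ edgeRel T x f := by
  constructor
  · rintro ⟨x₁, x₂, h, h₁, ⟨hnil, -⟩, rfl⟩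
    rwa [FinPath.comp_of_edges_nil_right hnil]
  · intro h
    exact ⟨x, ofVtx Γ₁ x.src, rfl, h, ⟨rfl, vtxRel_src_of_edgeRel (x := x) hsrc h⟩,
      (FinPath.comp_of_edges_nil_right rfl rfl).symm⟩

theorem ofVtx_mem_ckRel_iff {u : Γ₁.V} {v : Γ₂.V} :
    (ofVtx Γ₁ u, ofVtx Γ₂ v) ∈ ckRel Ω T ↔ vtxRel Ω u v :=
  ⟨fun h => h.2, fun h => ⟨rfl, h⟩⟩

theorem ofEdge_mem_ckRel_iff {f : Γ₂.E} (hsrc : gsrc Γ₁ '' T f ⊆ Ω (Γ₂.s f))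
    {x : FinPath Γ₁} : (x, ofEdge Γ₂ f) ∈ ckRel Ω T ↔ edgeRel T x f :=
  pathRel_singleton_iff hsrc

theorem isRelMor_ckRel (ha : CylDichotomy Ω) (hrng : ∀ f, grng Γ₁ '' T f ⊆ Ω (Γ₂.r f)) :
    IsRelMor Γ₁ Γ₂ (ckRel Ω T) where
  vtx := by
    rintro ⟨x, y⟩ h hy
    change pathRel Ω T x y.edges y.src at h
    rw [hy] at h
    exact h.1
  src_mem _ h := ofVtx_mem_ckRel_iff.mpr (vtxRel_src_of_pathRel h)
  rng_mem _ h := ofVtx_mem_ckRel_iff.mpr (vtxRel_rng_of_pathRel ha hrng h)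

theorem multiplicative_ckRel : Multiplicative Γ₁ Γ₂ (ckRel Ω T) :=
  fun _ _ _ _ hx _ h h' => pathRel_comp h h' hx

theorem decomposable_ckRel (ha : CylDichotomy Ω) (hrng : ∀ f, grng Γ₁ '' T f ⊆ Ω (Γ₂.r f)) :
    Decomposable Γ₁ Γ₂ (ckRel Ω T) := fun y y' hy _ h => by
  obtain ⟨x, x', hx, hL, hL', hc⟩ := exists_pathRel_of_pathRel_append ha hrng y.edges y' h
  exact ⟨x, x', hx, by rwa [ckRel, Set.mem_ofPred, hy], hL', hc⟩

theorem properRel_ckRel (hc : ∀ v, IsCompact (Ω v)) (hsrc : ∀ f, gsrc Γ₁ '' T f ⊆ Ω (Γ₂.s f)) :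
    ProperRel Γ₁ Γ₂ (ckRel Ω T) :=
  fun y => finite_setOf_pathRel hc hsrc y.edges y.src

theorem vertexDisjoint_ckRel (hdisj : ∀ v w, v ≠ w → Ω v ∩ Ω w = ∅) :
    VertexDisjoint Γ₁ Γ₂ (ckRel Ω T) := fun v v' hne => by
  refine Set.eq_empty_iff_forall_notMem.mpr fun x ⟨h, h'⟩ => ?_
  obtain ⟨z, hz⟩ := cylV_nonempty x.src
  exact Set.eq_empty_iff_forall_notMem.mp (hdisj v v' hne) z
    ⟨(h : pathRel Ω T x [] v).2 hz, (h' : pathRel Ω T x [] v').2 hz⟩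

theorem sourceBijective_ckRel (hb : BisectionDichotomy T)
    (hsrc : ∀ f, gsrc Γ₁ '' T f = Ω (Γ₂.s f)) : SourceBijective Γ₁ Γ₂ (ckRel Ω T) := by
  intro f
  have hrel {x : FinPath Γ₁} := ofEdge_mem_ckRel_iff (x := x) (hsrc f).subset
  refine ⟨fun x hx => ?_, fun x hx x' hx' hs => ?_, fun w hw => ?_⟩
  · exact (ofVtx_mem_ckRel_iff (T := T)).mpr (vtxRel_src_of_edgeRel (hsrc f).subset (hrel.mp hx))
  · exact edgeRel.eq_of_src_eq (hrel.mp hx) (hrel.mp hx') (congrArg FinPath.src hs :)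
  obtain ⟨hw₀, hw⟩ : w.edges = [] ∧ vtxRel Ω w.src (Γ₂.s f) := hw
  obtain ⟨z, hz⟩ := cylV_nonempty w.src
  obtain ⟨a, ha, rfl⟩ := (hsrc f).superset (hw hz)
  obtain ⟨x, h, hs, -⟩ := exists_edgeRel_of_mem hb ha
  refine ⟨x, hrel.mpr h, show ofVtx Γ₁ x.src = w from ?_⟩
  rw [hs, mem_cylV.mp hz, ← FinPath.eq_ofVtx_of_edges_nil hw₀]

theorem monotoneRel_ckRel (hsrc : ∀ f, gsrc Γ₁ '' T f ⊆ Ω (Γ₂.s f))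
    (hinj : ∀ f, Set.InjOn (grng Γ₁) (T f))
    (hdisj : ∀ f g, f ≠ g → grng Γ₁ '' T f ∩ grng Γ₁ '' T g = ∅) :
    MonotoneRel Γ₁ Γ₂ (ckRel Ω T) := by
  intro x x' f f' h h' hpre
  rw [ofEdge_mem_ckRel_iff (hsrc f)] at h
  rw [ofEdge_mem_ckRel_iff (hsrc f')] at h'
  rcases hpre with hpre | hpre
  · exact edgeRel.eq_of_isPrefix hinj hdisj h h' hpre
  · obtain ⟨rfl, rfl⟩ := edgeRel.eq_of_isPrefix hinj hdisj h' h hpre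
    exact ⟨rfl, rfl⟩

theorem regularRel_ckRel (hb : BisectionDichotomy T) (hsrc : ∀ f, gsrc Γ₁ '' T f ⊆ Ω (Γ₂.s f))
    (hreg : ∀ v, Γ₂.Regular v → (⋃ f ∈ {f | Γ₂.r f = v}, grng Γ₁ '' T f) = Ω v) :
    RegularRel Γ₁ Γ₂ (ckRel Ω T) := by
  intro v hv u hu x hx
  obtain ⟨f, x', hf, h, hpre⟩ :=
    exists_edgeRel_of_vtxRel hb (hreg v hv).superset (ofVtx_mem_ckRel_iff.mp hu) hx
  exact ⟨f, x', hf, (ofEdge_mem_ckRel_iff (hsrc f)).mpr h, hpre⟩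

theorem isAdmissible_ckRel (hCK : IsDCKb Γ₁ Γ₂ Ω T) (ha : CylDichotomy Ω)
    (hb : BisectionDichotomy T) : IsAdmissible Γ₁ Γ₂ (ckRel Ω T) where
  relMor := isRelMor_ckRel ha hCK.rng_sub
  mult := multiplicative_ckRel
  decomp := decomposable_ckRel ha hCK.rng_sub
  proper := properRel_ckRel hCK.compact_Ω fun f => (hCK.src_eq f).subset
  vdisj := vertexDisjoint_ckRel hCK.disj
  sbij := sourceBijective_ckRel hb hCK.src_eq
  mono := monotoneRel_ckRel (fun f => (hCK.src_eq f).subset) hCK.inj_r hCK.rng_disj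
  regular := regularRel_ckRel hb (fun f => (hCK.src_eq f).subset) hCK.reg

theorem relΩ_ckRel (ha : CylDichotomy Ω) (v : Γ₂.V) : relΩ Γ₁ Γ₂ (ckRel Ω T) v = Ω v := by
  ext z
  simp only [relΩ, Set.mem_iUnion, Set.mem_ofPred, ofVtx_mem_ckRel_iff]
  exact ⟨fun ⟨_, hu, hz⟩ => hu hz, fun hz => ⟨z.rng, vtxRel_of_inter_nonempty ha ⟨z, rfl, hz⟩, rfl⟩⟩

theorem relT_ckRel (hb : BisectionDichotomy T) {f : Γ₂.E} (hsrc : gsrc Γ₁ '' T f ⊆ Ω (Γ₂.s f)) :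
    relT Γ₁ Γ₂ (ckRel Ω T) f = T f := by
  ext a
  simp only [relT, Set.mem_iUnion, Set.mem_ofPred, ofEdge_mem_ckRel_iff hsrc]
  refine ⟨fun ⟨_, h, ha⟩ => ZZ_subset_of_edgeRel h ha, fun ha => ?_⟩
  obtain ⟨x, h, -, hax⟩ := exists_edgeRel_of_mem hb ha
  exact ⟨x, h, hax⟩

end DGraph

open DGraph in
/-- A dynamical Cuntz--Krieger `Γ₂`-family in the boundary path groupoid `G_{Γ₁}`
satisfying the two extra conditions (a) and (b) arises from an admissible relation
morphism `R : Γ₁ → Γ₂`, which is given on vertices by `Z_u Ω_v = Z_u` and on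
edges by `T_f Z(s(x), x) = Z(x, x)`. -/
theorem dCK_from_admissible (Γ₁ Γ₂ : DGraph)
    (Ω : Γ₂.V → Set (BPath Γ₁)) (T : Γ₂.E → Set (GArrT Γ₁))
    (hCK : IsDCKb Γ₁ Γ₂ Ω T)
    (ha : ∀ (u : Γ₁.V) (v : Γ₂.V),
      cylV Γ₁ u ∩ Ω v = ∅ ∨ cylV Γ₁ u ∩ Ω v = cylV Γ₁ u)
    (hb : ∀ (u : Γ₁.V) (f : Γ₂.E),
      gmul Γ₁ (T f) (unitSet Γ₁ (cylV Γ₁ u)) = ∅ ∨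
      ∃ x : FinPath Γ₁,
        gmul Γ₁ (T f) (unitSet Γ₁ (cylV Γ₁ u)) = ZZ Γ₁ x (ofVtx Γ₁ x.src)) :
    ∃ R : Set (FinPath Γ₁ × FinPath Γ₂), IsAdmissible Γ₁ Γ₂ R ∧
      (∀ v, Ω v = relΩ Γ₁ Γ₂ R v) ∧
      (∀ f, T f = relT Γ₁ Γ₂ R f) ∧
      (∀ (u : Γ₁.V) (v : Γ₂.V),
        (ofVtx Γ₁ u, ofVtx Γ₂ v) ∈ R ↔ cylV Γ₁ u ∩ Ω v = cylV Γ₁ u) ∧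
      (∀ (x : FinPath Γ₁) (f : Γ₂.E),
        (x, ofEdge Γ₂ f) ∈ R ↔
          gmul Γ₁ (T f) (ZZ Γ₁ (ofVtx Γ₁ x.src) x) = ZZ Γ₁ x x) := by
  refine ⟨ckRel Ω T, isAdmissible_ckRel hCK ha hb, fun v => (relΩ_ckRel ha v).symm,
    fun f => (relT_ckRel hb (hCK.src_eq f).subset).symm, fun u v => ?_, fun x f => ?_⟩
  · exact ofVtx_mem_ckRel_iff.trans Set.inter_eq_left.symm
  · exact (ofEdge_mem_ckRel_iff (hCK.src_eq f).subset).trans (edgeRel_iff_gmul hb)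
end

section
/- Let R : Γ₁ → Γ₂ be a relation morphism that is proper and source bijective, and suppose R is multiplicative and decomposable. Then R⁻¹(y) is finite for every finite path y ∈ FP(Γ₂). -/
open DGraph in
/-- If a relation morphism `R : Γ₁ → Γ₂` is multiplicative, decomposable, source
bijective, and has finite preimages of vertices, then `R⁻¹(y)` is finite for every
finite path `y` in `Γ₂`. -/
theorem relation_proper_on_paths (Γ₁ Γ₂ : DGraph)
    (R : Set (FinPath Γ₁ × FinPath Γ₂)) (hR : IsRelMor Γ₁ Γ₂ R)
    (hmult : Multiplicative Γ₁ Γ₂ R) (hdec : Decomposable Γ₁ Γ₂ R)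
    (hsb : SourceBijective Γ₁ Γ₂ R)
    (hver : ∀ v : Γ₂.V, {x | (x, ofVtx Γ₂ v) ∈ R}.Finite) :
    ∀ y : FinPath Γ₂, {x | (x, y) ∈ R}.Finite := by
  have ψinj : Function.Injective
      (fun x : FinPath Γ₁ => (x.edges, x.src)) := by
    rintro ⟨L, v, h⟩ ⟨L', v', h'⟩ he
    simp only [Prod.mk.injEq] at he
    obtain ⟨h1, h2⟩ := he
    subst h1; subst h2; rfl
  intro y
  obtain ⟨L, v, hc⟩ := y
  induction L generalizing v with
  | nil =>
    have : (⟨[], v, hc⟩ : FinPath Γ₂) = ofVtx Γ₂ v := rfl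
    rw [this]; exact hver v
  | cons e L ih =>
    have hc' : Γ₂.compat L v := by
      cases L with
      | nil => trivial
      | cons f t => exact hc.2
    have hlink : (ofEdge Γ₂ e).src = (⟨L, v, hc'⟩ : FinPath Γ₂).rng := by
      cases L with
      | nil => exact hc
      | cons f t => exact hc.1
    have hy : (⟨e :: L, v, hc⟩ : FinPath Γ₂)
        = FinPath.comp Γ₂ (ofEdge Γ₂ e) ⟨L, v, hc'⟩ hlink := rfl
    have hS₁ : {x | (x, ofEdge Γ₂ e) ∈ R}.Finite := by
      have him : ((fun x : FinPath Γ₁ => ofVtx Γ₁ x.src) ''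
          {x | (x, ofEdge Γ₂ e) ∈ R}).Finite := by
        rw [(hsb e).image_eq]
        exact hver _
      exact Set.Finite.of_finite_image him (hsb e).injOn
    have hS₂ : {x | (x, (⟨L, v, hc'⟩ : FinPath Γ₂)) ∈ R}.Finite := ih v hc'
    apply Set.Finite.of_finite_image _ ψinj.injOn
    have hsub : (fun x : FinPath Γ₁ => (x.edges, x.src)) ''
        {x | (x, (⟨e :: L, v, hc⟩ : FinPath Γ₂)) ∈ R} ⊆
        (fun p : FinPath Γ₁ × FinPath Γ₁ => (p.1.edges ++ p.2.edges, p.2.src)) ''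
        ({x | (x, ofEdge Γ₂ e) ∈ R} ×ˢ {x | (x, (⟨L, v, hc'⟩ : FinPath Γ₂)) ∈ R}) := by
      rintro _ ⟨xb, hxb, rfl⟩
      rw [hy] at hxb
      obtain ⟨x, x', hx, hx1, hx2, hcomp⟩ := hdec _ _ hlink xb hxb
      refine ⟨(x, x'), ⟨hx1, hx2⟩, ?_⟩
      rw [← hcomp]
      rfl
    exact Set.Finite.subset ((hS₁.prod hS₂).image _) hsub
end

section
/- Let Γ₁, Γ₂ be the graphs of Example 5.5 (Γ₁ a directed path u₁ → u₂ → u₃; Γ₂ two parallel edges f₁, f₂ from v₁ to v₂). The assignment Ω_{u₁} = Z_{v₁}, Ω_{u₂} = Z_{f₁}, Ω_{u₃} = Z_{f₂}, T_{e₁} = Z(f₁, s(f₁)), T_{e₂} = Z(f₂, f₁) is a nondegenerate dynamical Cuntz–Krieger Γ₁-family in the boundary path groupoid G_{Γ₂}, and it does not satisfy condition (a) of Theorem 4.1 (since Ω_{u₂} Z_{v₂} = Z_{f₁} is neither empty nor all of Z_{v₂}), hence it does not arise from an admissible relation morphism. -/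
/-- The graph `Γ₁` of Example 5.5: a directed path `u₁ → u₂ → u₃`. -/
abbrev Γ1ex : DGraph := ⟨Fin 3, Fin 2, Fin.succ, Fin.castSucc⟩

/-- The graph `Γ₂` of Example 5.5: two parallel edges `f₁, f₂ : v₁ → v₂`. -/
abbrev Γ2ex : DGraph := ⟨Fin 2, Fin 2, fun _ => 1, fun _ => 0⟩

open DGraph in
/-- The inverse dynamical Cuntz--Krieger `Γ₁`-family in `G_{Γ₂}` of
Example 5.5. -/
noncomputable def Ωex : Γ1ex.V → Set (BPath Γ2ex) := fun u =>
  if u = 0 then cylV Γ2ex 0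
  else if u = 1 then cyl Γ2ex (ofEdge Γ2ex 0)
  else cyl Γ2ex (ofEdge Γ2ex 1)

open DGraph in
/-- The bisections of the inverse family of Example 5.5:
`T_{e₁} = Z(f₁, s(f₁))` and `T_{e₂} = Z(f₂, f₁)`. -/
noncomputable def Tex : Γ1ex.E → Set (GArrT Γ2ex) := fun e =>
  if e = 0 then ZZ Γ2ex (ofEdge Γ2ex 0) (ofVtx Γ2ex 0)
  else ZZ Γ2ex (ofEdge Γ2ex 1) (ofEdge Γ2ex 0)

/-!
The boundary path space of `Γ₂` has exactly three points `v₁`, `f₁`, `f₂`: `v₁` receives no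
edge, `v₂` is regular, and no path has length two. Hence it is discrete, every `Ω_u` is a
single point and every `T_e` a single arrow, and the Cuntz–Krieger conditions reduce to
bookkeeping about these points. A family coming from a relation morphism has each `Ω_u` a
union of vertex cylinders `Z_v`, whereas `Ω_{u₂} = {f₁}` splits `Z_{v₂} = {f₁, f₂}`.
-/

namespace DGraph

variable {Γ : DGraph}

theorem isOpen_cyl (x : FinPath Γ) : IsOpen (cyl Γ x) :=
  TopologicalSpace.GenerateOpen.basic _ ⟨x, ∅, Set.finite_empty, by simp⟩

instance [DiscreteTopology (BPath Γ)] : DiscreteTopology (GArrT Γ) :=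
  inferInstanceAs (DiscreteTopology {t : BPath Γ × ℤ × BPath Γ // t ∈ Γ.GArr})

def zzArrow (x y : FinPath Γ) (z : BPath Γ) (hx : x.src = z.rng) (hy : y.src = z.rng) :
    GArrT Γ :=
  ⟨(BPath.cons Γ x z hx, (x.edges.length : ℤ) - y.edges.length, BPath.cons Γ y z hy),
    x, y, z, hx, hy, rfl, rfl, rfl⟩

theorem cyl_eq_singleton {x : FinPath Γ} {z : BPath Γ} (hz : cylV Γ x.src = {z})
    (hx : x.src = z.rng) :
    cyl Γ x = {BPath.cons Γ x z hx} := by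
  ext t
  constructor
  · rintro ⟨z', hx', rfl⟩
    obtain rfl : z' = z := hz.subset hx'.symm
    rfl
  · rintro rfl
    exact ⟨z, hx, rfl⟩

theorem ZZ_eq_singleton {x y : FinPath Γ} {z : BPath Γ} (hz : cylV Γ x.src = {z})
    (hx : x.src = z.rng) (hy : y.src = z.rng) :
    ZZ Γ x y = {zzArrow x y z hx hy} := by
  ext t
  constructor
  · rintro ⟨z', hx', hy', ht⟩
    obtain rfl : z' = z := hz.subset hx'.symm
    exact Subtype.ext ht
  · rintro rfl
    exact ⟨z, hx, hy, rfl⟩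

theorem isDCKb_singleton {Λ : DGraph} [DiscreteTopology (BPath Λ)]
    (p : Γ.V → BPath Λ) (a : Γ.E → GArrT Λ) (hp : p.Injective) (hr : Γ.r.Injective)
    (hsrc : ∀ e, gsrc Λ (a e) = p (Γ.s e)) (hrng : ∀ e, grng Λ (a e) = p (Γ.r e)) :
    IsDCKb Λ Γ (fun v => {p v}) (fun e => {a e}) where
  compact_Ω _ := isCompact_singleton
  open_Ω _ := isOpen_discrete _
  compact_T _ := isCompact_singleton
  open_T _ := isOpen_discrete _
  inj_r _ := Set.injOn_singleton _ _
  inj_s _ := Set.injOn_singleton _ _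
  disj v w hvw := Set.singleton_inter_eq_empty.mpr (hp.ne hvw)
  src_eq e := by simp [hsrc]
  rng_sub e := by simp [hrng]
  rng_disj f g hfg := by
    rw [Set.image_singleton, Set.image_singleton, hrng, hrng]
    exact Set.singleton_inter_eq_empty.mpr (hp.ne (hr.ne hfg))
  reg v hv := by
    have hconst : ∀ f ∈ {f | Γ.r f = v}, grng Λ '' {a f} = {p v} := by
      rintro f rfl
      simp [hrng]
    rw [Set.iUnion₂_congr hconst, Set.biUnion_const hv.2]

variable {Γ' : DGraph}

/-- Condition (a) of Theorem 4.1. -/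
theorem cylV_inter_relΩ_eq_empty_or_eq (R : Set (FinPath Γ × FinPath Γ')) (u : Γ'.V)
    (v : Γ.V) :
    cylV Γ v ∩ relΩ Γ Γ' R u = ∅ ∨ cylV Γ v ∩ relΩ Γ Γ' R u = cylV Γ v := by
  by_cases hv : (ofVtx Γ v, ofVtx Γ' u) ∈ R
  · exact Or.inr (Set.inter_eq_left.mpr (Set.subset_biUnion_of_mem (u := cylV Γ) hv))
  · refine Or.inl (Set.eq_empty_of_forall_notMem ?_)
    rintro z ⟨hzv, hz⟩
    obtain ⟨w, hw, hzw⟩ := Set.mem_iUnion₂.mp hz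
    exact hv ((hzv.symm.trans hzw) ▸ hw)

end DGraph

open DGraph

namespace Γ2ex

theorem not_regular_zero : ¬ Γ2ex.Regular 0 :=
  fun ⟨_, _, he⟩ => (by decide : (1 : Fin 2) ≠ 0) he

theorem regular_one : Γ2ex.Regular 1 := ⟨Set.toFinite _, 0, rfl⟩

def pathV₁ : BPath Γ2ex := .fin (ofVtx Γ2ex 0) not_regular_zero

def pathE (f : Γ2ex.E) : BPath Γ2ex := .fin (ofEdge Γ2ex f) not_regular_zero

theorem pathE_injective : Function.Injective pathE := by
  intro f g h
  injection h with h
  injection h with h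
  simpa using h

theorem pathV₁_ne_pathE (f : Γ2ex.E) : pathV₁ ≠ pathE f := by
  intro h
  injection h with h
  injection h with h
  simp at h

theorem bpath_cases (z : BPath Γ2ex) : z = pathV₁ ∨ ∃ f, z = pathE f := by
  rcases z with ⟨⟨L, v, hc⟩, hv⟩ | ⟨σ, hσ⟩
  · obtain rfl | rfl : v = 0 ∨ v = 1 := Fin.exists_fin_two.mp ⟨v, rfl⟩
    swap
    · exact absurd regular_one hv
    rcases L with _ | ⟨e, _ | ⟨f, L⟩⟩
    · exact Or.inl rfl
    · exact Or.inr ⟨e, rfl⟩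
    · exact absurd hc.1 (by decide : (0 : Fin 2) ≠ 1)
  · exact absurd (hσ 0) (by decide : (0 : Fin 2) ≠ 1)

theorem cylV_zero : cylV Γ2ex 0 = {pathV₁} := by
  ext z
  rcases bpath_cases z with rfl | ⟨f, rfl⟩
  · exact iff_of_true rfl rfl
  · exact iff_of_false (by decide : (1 : Fin 2) ≠ 0) (pathV₁_ne_pathE f).symm

theorem cylV_one : cylV Γ2ex 1 = Set.range pathE := by
  ext z
  rcases bpath_cases z with rfl | ⟨f, rfl⟩
  · refine iff_of_false (by decide : (0 : Fin 2) ≠ 1) ?_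
    rintro ⟨f, hf⟩
    exact pathV₁_ne_pathE f hf.symm
  · exact iff_of_true rfl ⟨f, rfl⟩

theorem cyl_ofEdge (f : Γ2ex.E) : cyl Γ2ex (ofEdge Γ2ex f) = {pathE f} :=
  (cyl_eq_singleton cylV_zero rfl).trans rfl

instance : DiscreteTopology (BPath Γ2ex) := by
  refine discreteTopology_iff_isOpen_singleton.mpr fun z => ?_
  rcases bpath_cases z with rfl | ⟨f, rfl⟩
  · exact cyl_eq_singleton (x := ofVtx Γ2ex 0) cylV_zero rfl ▸ isOpen_cyl _
  · exact cyl_ofEdge f ▸ isOpen_cyl _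

def Ωpoint : Γ1ex.V → BPath Γ2ex := ![pathV₁, pathE 0, pathE 1]

def Tarrow : Γ1ex.E → GArrT Γ2ex :=
  ![zzArrow (ofEdge Γ2ex 0) (ofVtx Γ2ex 0) pathV₁ rfl rfl,
    zzArrow (ofEdge Γ2ex 1) (ofEdge Γ2ex 0) pathV₁ rfl rfl]

theorem Ωex_eq (u : Γ1ex.V) : Ωex u = {Ωpoint u} := by
  fin_cases u
  · exact cylV_zero
  · exact cyl_ofEdge 0
  · exact cyl_ofEdge 1

theorem Tex_eq (e : Γ1ex.E) : Tex e = {Tarrow e} := by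
  fin_cases e <;> exact ZZ_eq_singleton cylV_zero rfl rfl

theorem Ωpoint_bijective : Function.Bijective Ωpoint := by
  refine ⟨fun u w h => ?_, fun z => ?_⟩
  · fin_cases u <;> fin_cases w <;>
      simp_all [Ωpoint, pathE_injective.eq_iff, pathV₁_ne_pathE, (pathV₁_ne_pathE _).symm]
  · rcases bpath_cases z with rfl | ⟨f, rfl⟩
    · exact ⟨0, rfl⟩
    · fin_cases f
      · exact ⟨1, rfl⟩
      · exact ⟨2, rfl⟩

theorem gsrc_Tarrow (e : Γ1ex.E) : gsrc Γ2ex (Tarrow e) = Ωpoint (Γ1ex.s e) := by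
  fin_cases e <;> rfl

theorem grng_Tarrow (e : Γ1ex.E) : grng Γ2ex (Tarrow e) = Ωpoint (Γ1ex.r e) := by
  fin_cases e <;> rfl

end Γ2ex

open Γ2ex

open DGraph in
/-- The family `Ω_{u₁} = Z_{v₁}`, `Ω_{u₂} = Z_{f₁}`, `Ω_{u₃} = Z_{f₂}`,
`T_{e₁} = Z(f₁, s(f₁))`, `T_{e₂} = Z(f₂, f₁)` is a nondegenerate dynamical
Cuntz--Krieger `Γ₁`-family in the boundary path groupoid `G_{Γ₂}`; it violates
condition (a) of Theorem 4.1 (`Z_{v₂} ∩ Ω_{u₂} = Z_{f₁}` is neither empty nor all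
of `Z_{v₂}`), and hence it does not arise from an admissible relation morphism. -/
theorem inverse_family_not_from_relation :
    IsDCKb Γ2ex Γ1ex Ωex Tex ∧
    (⋃ u, Ωex u) = Set.univ ∧
    cylV Γ2ex 1 ∩ Ωex 1 = cyl Γ2ex (ofEdge Γ2ex 0) ∧
    ¬ (cylV Γ2ex 1 ∩ Ωex 1 = ∅ ∨ cylV Γ2ex 1 ∩ Ωex 1 = cylV Γ2ex 1) ∧
    ¬ ∃ R : Set (FinPath Γ2ex × FinPath Γ1ex), IsAdmissible Γ2ex Γ1ex R ∧
        (∀ u, Ωex u = relΩ Γ2ex Γ1ex R u) ∧ (∀ e, Tex e = relT Γ2ex Γ1ex R e) := by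
  have hΩ : Ωex = fun u => {Ωpoint u} := funext Ωex_eq
  have hT : Tex = fun e => {Tarrow e} := funext Tex_eq
  have hcondA : cylV Γ2ex 1 ∩ Ωex 1 = cyl Γ2ex (ofEdge Γ2ex 0) := by
    rw [cylV_one, Ωex_eq, cyl_ofEdge]
    exact Set.inter_eq_right.mpr (Set.singleton_subset_iff.mpr ⟨0, rfl⟩)
  have hnotA : ¬ (cylV Γ2ex 1 ∩ Ωex 1 = ∅ ∨ cylV Γ2ex 1 ∩ Ωex 1 = cylV Γ2ex 1) := by
    rw [hcondA, cyl_ofEdge, cylV_one]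
    rintro (h | h)
    · exact Set.singleton_ne_empty _ h
    · exact (by decide : (1 : Fin 2) ≠ 0) (pathE_injective (h.symm.subset ⟨1, rfl⟩))
  refine ⟨hΩ ▸ hT ▸ isDCKb_singleton Ωpoint Tarrow Ωpoint_bijective.injective
    (Fin.succ_injective 2) gsrc_Tarrow grng_Tarrow, ?_, hcondA, hnotA, ?_⟩
  · rw [hΩ, Set.iUnion_singleton_eq_range, Set.range_eq_univ]
    exact Ωpoint_bijective.surjective
  · rintro ⟨R, -, hR, -⟩
    exact hnotA (hR 1 ▸ cylV_inter_relΩ_eq_empty_or_eq R 1 1)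
end
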